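/- arXiv:2603.23328 — 3 statements merged into one kernel-verified Lean document; each statement's English description precedes it below -/
import Mathlib

section
/- Let φ = (1 + √5)/2 and let ICOS ⊂ ℝ³ be the 30-point icosidodecahedron vertex set. The collection of 3-element subsets {a, b, c} ⊆ ICOS with a + b + c = 0 has exactly 20 members, and every point of ICOS belongs to exactly 2 of these 20 zero-sum triples. -/
local notation "⟪" x ", " y "⟫" => @inner ℝ _ _ x y

noncomputable abbrev pt (a b c : ℝ) : EuclideanSpace ℝ (Fin 3) := WithLp.toLp 2 ![a, b, c]

noncomputable def phi : ℝ := (1 + Real.sqrt 5) / 2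

/-- The 30 vertices of the icosidodecahedron: all even (cyclic) coordinate
permutations of `(0, 0, ±1)` and `(±(φ-1)/2, ±1/2, ±φ/2)`. -/
def ICOS : Set (EuclideanSpace ℝ (Fin 3)) :=
  {x | (∃ s ∈ ({1, -1} : Set ℝ),
          x = pt 0 0 s ∨ x = pt 0 s 0 ∨ x = pt s 0 0) ∨
       (∃ s₁ ∈ ({1, -1} : Set ℝ), ∃ s₂ ∈ ({1, -1} : Set ℝ), ∃ s₃ ∈ ({1, -1} : Set ℝ),
          x = pt (s₁ * ((phi - 1) / 2)) (s₂ * (1 / 2)) (s₃ * (phi / 2)) ∨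
          x = pt (s₂ * (1 / 2)) (s₃ * (phi / 2)) (s₁ * ((phi - 1) / 2)) ∨
          x = pt (s₃ * (phi / 2)) (s₁ * ((phi - 1) / 2)) (s₂ * (1 / 2)))}

/-!
Every coordinate of a point of `ICOS` lies in `½ ℤ[φ]`, and `(a, b) ↦ (a + b φ) / 2` is an
injective additive map `ℤ × ℤ → ℝ` because `φ` is irrational. So `ICOS` is the injective
additive image of 30 explicit integer vectors in `(ℤ × ℤ)³`, and a finite set of points of
`ICOS` sums to zero exactly when the corresponding integer vectors do. Counting the zero-sum
triples thus becomes a finite computation over `ℤ`, which the kernel carries out.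
-/

open Function

theorem Irrational.intCast_add_intCast_mul_injective {α : ℝ} (hα : Irrational α) :
    Injective fun p : ℤ × ℤ => (p.1 : ℝ) + p.2 * α := by
  rintro ⟨a, b⟩ ⟨c, d⟩ h
  simp only at h
  have hbd : b = d := by
    by_contra hne
    have hdb : ((d : ℝ) - b) ≠ 0 := sub_ne_zero.mpr (by exact_mod_cast Ne.symm hne)
    apply hα.ne_rational (a - c) (d - b)
    push_cast
    field_simp
    linarith
  subst hbd
  simp_all

section ZeroSumSubsets

variable {A B : Type*} [AddCommMonoid A] [AddCommMonoid B] [DecidableEq A]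

def zeroSumSubsets (n : ℕ) (s : Finset A) : Finset (Finset A) :=
  (s.powersetCard n).filter fun t => ∑ x ∈ t, x = 0

theorem mem_zeroSumSubsets {n : ℕ} {s t : Finset A} :
    t ∈ zeroSumSubsets n s ↔ t ⊆ s ∧ t.card = n ∧ ∑ x ∈ t, x = 0 := by
  simp [zeroSumSubsets, and_assoc]

theorem zeroSumSubset_image_iff (f : A →+ B) (hf : Injective f) {n : ℕ} {s : Finset A}
    {t : Finset B} :
    (↑t ⊆ f '' s ∧ t.card = n ∧ ∑ x ∈ t, x = 0) ↔
      ∃ u ∈ zeroSumSubsets n s, u.map ⟨f, hf⟩ = t := by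
  have hs : f '' s = ↑(s.map ⟨f, hf⟩) := by rw [Finset.coe_map]; rfl
  rw [hs, Finset.coe_subset, Finset.subset_map_iff]
  simp only [mem_zeroSumSubsets]
  constructor
  · rintro ⟨⟨u, hus, rfl⟩, hcard, hsum⟩
    rw [Finset.card_map] at hcard
    rw [Finset.sum_map] at hsum
    exact ⟨u, ⟨hus, hcard, (map_eq_zero_iff f hf).mp (by rwa [map_sum])⟩, rfl⟩
  · rintro ⟨u, ⟨hus, hcard, hsum⟩, rfl⟩
    refine ⟨⟨u, hus, rfl⟩, by rwa [Finset.card_map], ?_⟩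
    rw [Finset.sum_map]
    change ∑ x ∈ u, f x = 0
    rw [← map_sum, hsum, map_zero]

theorem ncard_setOf_zeroSumSubset_image (f : A →+ B) (hf : Injective f) (n : ℕ)
    (s : Finset A) :
    {t : Finset B | ↑t ⊆ f '' s ∧ t.card = n ∧ ∑ x ∈ t, x = 0}.ncard =
      (zeroSumSubsets n s).card := by
  have : {t : Finset B | ↑t ⊆ f '' s ∧ t.card = n ∧ ∑ x ∈ t, x = 0} =
      (zeroSumSubsets n s).map (Finset.mapEmbedding ⟨f, hf⟩).toEmbedding := by
    ext t
    simp [zeroSumSubset_image_iff f hf]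
  rw [this, Set.ncard_coe_finset, Finset.card_map]

theorem ncard_setOf_zeroSumSubset_image_mem (f : A →+ B) (hf : Injective f) (n : ℕ)
    (s : Finset A) (a : A) :
    {t : Finset B | ↑t ⊆ f '' s ∧ t.card = n ∧ ∑ x ∈ t, x = 0 ∧ f a ∈ t}.ncard =
      ((zeroSumSubsets n s).filter (a ∈ ·)).card := by
  have : {t : Finset B | ↑t ⊆ f '' s ∧ t.card = n ∧ ∑ x ∈ t, x = 0 ∧ f a ∈ t} =
      ((zeroSumSubsets n s).filter (a ∈ ·)).map (Finset.mapEmbedding ⟨f, hf⟩).toEmbedding := by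
    ext t
    simp only [← and_assoc, zeroSumSubset_image_iff f hf]
    simp only [Set.mem_ofPred_eq, Finset.coe_map, RelEmbedding.coe_toEmbedding,
      Finset.mapEmbedding_apply, Finset.coe_filter, Set.mem_image]
    constructor
    · rintro ⟨⟨u, hu, rfl⟩, ha⟩
      exact ⟨u, ⟨hu, (Finset.mem_map' _).mp ha⟩, rfl⟩
    · rintro ⟨u, ⟨hu, ha⟩, rfl⟩
      exact ⟨⟨u, hu, rfl⟩, Finset.mem_map_of_mem _ ha⟩
  rw [this, Set.ncard_coe_finset, Finset.card_map]

end ZeroSumSubsets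

theorem irrational_phi : Irrational phi := Real.goldenRatio_irrational

noncomputable def halfGolden : ℤ × ℤ →+ ℝ where
  toFun p := (p.1 + p.2 * phi) / 2
  map_zero' := by simp
  map_add' p q := by simp only [Prod.fst_add, Prod.snd_add]; push_cast; ring

theorem halfGolden_injective : Injective halfGolden := fun _ _ h =>
  irrational_phi.intCast_add_intCast_mul_injective (by simpa [halfGolden] using h)

abbrev GoldenCoords := (ℤ × ℤ) × (ℤ × ℤ) × (ℤ × ℤ)

namespace GoldenCoords

noncomputable def toPoint : GoldenCoords →+ EuclideanSpace ℝ (Fin 3) where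
  toFun p := pt (halfGolden p.1) (halfGolden p.2.1) (halfGolden p.2.2)
  map_zero' := by ext i; fin_cases i <;> simp
  map_add' _ _ := by ext i; fin_cases i <;> simp

theorem toPoint_injective : Injective toPoint := fun _ _ h =>
  Prod.ext (halfGolden_injective (congrArg (· 0) h))
    (Prod.ext (halfGolden_injective (congrArg (· 1) h)) (halfGolden_injective (congrArg (· 2) h)))

def rotate (p : GoldenCoords) : GoldenCoords := (p.2.1, p.2.2, p.1)

end GoldenCoords

open GoldenCoords

def signs : Finset ℤ := {1, -1}

def icosAxisCoords (z : ℤ) : GoldenCoords := ((0, 0), (0, 0), (2 * z, 0))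

def icosMidCoords (z₁ z₂ z₃ : ℤ) : GoldenCoords := ((-z₁, z₁), (z₂, 0), (0, z₃))

def icosCoords : Finset GoldenCoords :=
  (signs.image icosAxisCoords ∪
      signs.biUnion fun z₁ => signs.biUnion fun z₂ => signs.image (icosMidCoords z₁ z₂)).biUnion
    fun p => {p, rotate p, rotate (rotate p)}

section

variable (z z₁ z₂ z₃ : ℤ)

theorem toPoint_icosAxisCoords : toPoint (icosAxisCoords z) = pt 0 0 z := by
  simp [toPoint, icosAxisCoords, halfGolden]

theorem toPoint_rotate_icosAxisCoords : toPoint (rotate (icosAxisCoords z)) = pt 0 z 0 := by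
  simp [toPoint, icosAxisCoords, rotate, halfGolden]

theorem toPoint_rotate_rotate_icosAxisCoords :
    toPoint (rotate (rotate (icosAxisCoords z))) = pt z 0 0 := by
  simp [toPoint, icosAxisCoords, rotate, halfGolden]

theorem toPoint_icosMidCoords : toPoint (icosMidCoords z₁ z₂ z₃) =
    pt (z₁ * ((phi - 1) / 2)) (z₂ * (1 / 2)) (z₃ * (phi / 2)) := by
  simp only [toPoint, icosMidCoords, halfGolden, AddMonoidHom.coe_mk, ZeroHom.coe_mk]
  push_cast
  ring_nf

theorem toPoint_rotate_icosMidCoords : toPoint (rotate (icosMidCoords z₁ z₂ z₃)) =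
    pt (z₂ * (1 / 2)) (z₃ * (phi / 2)) (z₁ * ((phi - 1) / 2)) := by
  simp only [toPoint, icosMidCoords, rotate, halfGolden, AddMonoidHom.coe_mk, ZeroHom.coe_mk]
  push_cast
  ring_nf

theorem toPoint_rotate_rotate_icosMidCoords :
    toPoint (rotate (rotate (icosMidCoords z₁ z₂ z₃))) =
      pt (z₃ * (phi / 2)) (z₁ * ((phi - 1) / 2)) (z₂ * (1 / 2)) := by
  simp only [toPoint, icosMidCoords, rotate, halfGolden, AddMonoidHom.coe_mk, ZeroHom.coe_mk]
  push_cast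
  ring_nf

end

theorem exists_mem_signs_iff {P : ℝ → Prop} :
    (∃ s ∈ ({1, -1} : Set ℝ), P s) ↔ ∃ z ∈ signs, P z := by
  simp [signs]

theorem ICOS_eq_image_icosCoords : ICOS = toPoint '' icosCoords := by
  ext x
  simp only [ICOS, Set.mem_ofPred_eq, exists_mem_signs_iff, ← toPoint_icosAxisCoords,
    ← toPoint_rotate_icosAxisCoords, ← toPoint_rotate_rotate_icosAxisCoords,
    ← toPoint_icosMidCoords, ← toPoint_rotate_icosMidCoords,
    ← toPoint_rotate_rotate_icosMidCoords]
  simp only [Set.mem_image, Finset.mem_coe, icosCoords, Finset.mem_biUnion, Finset.mem_union,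
    Finset.mem_image, Finset.mem_insert, Finset.mem_singleton, or_and_right, exists_or,
    exists_exists_and_eq_and]
  constructor
  · rintro (⟨z, hz, h | h | h⟩ | ⟨z₁, h₁, z₂, h₂, z₃, h₃, h | h | h⟩) <;> subst h
    all_goals first
      | exact Or.inl ⟨_, ⟨z, hz, by simp⟩, rfl⟩
      | exact Or.inr ⟨_, ⟨_, ⟨z₁, h₁, z₂, h₂, z₃, h₃, rfl⟩, by simp⟩, rfl⟩
  · rintro (⟨p, ⟨z, hz, rfl | rfl | rfl⟩, rfl⟩ |
      ⟨p, ⟨_, ⟨z₁, h₁, z₂, h₂, z₃, h₃, rfl⟩, rfl | rfl | rfl⟩, rfl⟩)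
    all_goals first
      | exact Or.inl ⟨z, hz, by simp⟩
      | exact Or.inr ⟨z₁, h₁, z₂, h₂, z₃, h₃, by simp⟩

set_option maxRecDepth 10000 in
theorem card_zeroSumSubsets_icosCoords : (zeroSumSubsets 3 icosCoords).card = 20 := by
  decide

set_option maxRecDepth 10000 in
theorem card_filter_mem_zeroSumSubsets_icosCoords :
    ∀ q ∈ icosCoords, ((zeroSumSubsets 3 icosCoords).filter (q ∈ ·)).card = 2 := by
  decide

/-- The icosidodecahedron has exactly 20 zero-sum triples (3-element subsets
summing to the zero vector), and every vertex lies in exactly 2 of them. -/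
theorem icos_zero_sum_triples :
    {t : Finset (EuclideanSpace ℝ (Fin 3)) |
        ↑t ⊆ ICOS ∧ t.card = 3 ∧ ∑ x ∈ t, x = 0}.ncard = 20 ∧
    ∀ p ∈ ICOS,
      {t : Finset (EuclideanSpace ℝ (Fin 3)) |
        ↑t ⊆ ICOS ∧ t.card = 3 ∧ ∑ x ∈ t, x = 0 ∧ p ∈ t}.ncard = 2 := by
  rw [ICOS_eq_image_icosCoords]
  refine ⟨?_, ?_⟩
  · rw [ncard_setOf_zeroSumSubset_image toPoint toPoint_injective,
      card_zeroSumSubsets_icosCoords]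
  · rintro _ ⟨q, hq, rfl⟩
    rw [ncard_setOf_zeroSumSubset_image_mem toPoint toPoint_injective,
      card_filter_mem_zeroSumSubsets_icosCoords q hq]
end

section
/- Let φ = (1 + √5)/2 and let ICOS ⊂ ℝ³ be the 30-point icosidodecahedron vertex set. There exists a map q : ICOS → ℤ such that q(p) ∈ {-4,-3,-2,-1,1,2,3,4} for every p ∈ ICOS, q(-p) = -q(p) for every p ∈ ICOS, and q(a) + q(b) + q(c) = 0 for all a, b, c ∈ ICOS with a + b + c = 0. (That is, the icosidodecahedron configuration admits a nowhere-zero 5-flow labeling, corresponding to a nowhere-zero 5-flow on the Petersen graph.) -/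
local notation "⟪" x ", " y "⟫" => @inner ℝ _ _ x y

/-!
An additive map `Λ : ℝ³ → ℚ` is odd and vanishes on the sum of any zero-sum triple, so rounding it
gives a flow labeling as soon as `Λ` takes values in `{±1, …, ±4}` on `ICOS`. All coordinates of
points of `ICOS` lie in `ℚ + ℚφ`, and since `φ` is irrational the coordinates `(a, b)` of
`a + bφ` extend to a `ℚ`-linear map `ℝ → ℚ²`; a suitable fixed rational combination of the
coordinates of `x₀, x₁, x₂` then does the job.
-/

section FlowLabeling

variable {V : Type*} [AddCommGroup V]

def IsFlowLabeling (S : Set V) (A : Set ℤ) (q : V → ℤ) : Prop :=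
  (∀ p ∈ S, q p ∈ A) ∧ (∀ p ∈ S, q (-p) = -q p) ∧
    (∀ a ∈ S, ∀ b ∈ S, ∀ c ∈ S, a + b + c = 0 → q a + q b + q c = 0)

theorem isFlowLabeling_round_comp {S : Set V} {A : Set ℤ} {Λ : V →+ ℚ}
    (h : ∀ p ∈ S, ∃ m ∈ A, Λ p = m) : IsFlowLabeling S A (fun x ↦ round (Λ x)) := by
  have round_eq {p} (hp : p ∈ S) : ∃ m ∈ A, Λ p = m ∧ round (Λ p) = m := by
    obtain ⟨m, hm, hΛ⟩ := h p hp
    exact ⟨m, hm, hΛ, by rw [hΛ, round_intCast]⟩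
  refine ⟨fun p hp ↦ ?_, fun p hp ↦ ?_, fun a ha b hb c hc habc ↦ ?_⟩
  · obtain ⟨m, hm, -, hq⟩ := round_eq hp
    simpa [hq] using hm
  · obtain ⟨m, -, hΛ, -⟩ := round_eq hp
    simp only [map_neg, hΛ, ← Int.cast_neg, round_intCast]
  · obtain ⟨l, -, hΛa, hqa⟩ := round_eq ha
    obtain ⟨m, -, hΛb, hqb⟩ := round_eq hb
    obtain ⟨n, -, hΛc, hqc⟩ := round_eq hc
    have hsum : (l + m + n : ℚ) = 0 := by
      rw [← hΛa, ← hΛb, ← hΛc, ← map_add, ← map_add, habc, map_zero]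
    simp only [hqa, hqb, hqc]
    exact_mod_cast hsum

end FlowLabeling

theorem LinearIndependent.exists_linearMap_apply_eq_single {K V ι : Type*} [DivisionRing K]
    [AddCommGroup V] [Module K V] [Fintype ι] [DecidableEq ι] {v : ι → V}
    (hv : LinearIndependent K v) : ∃ f : V →ₗ[K] ι → K, ∀ i, f (v i) = Pi.single i 1 := by
  obtain ⟨f, hf⟩ := LinearMap.exists_extend (Module.Basis.span hv).equivFun.toLinearMap
  refine ⟨f, fun i ↦ ?_⟩
  simpa [Module.Basis.span_apply, Module.Basis.equivFun_self, Finsupp.single_eq_pi_single]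
    using LinearMap.congr_fun hf (Module.Basis.span hv i)

theorem Irrational.linearIndependent_one_self {x : ℝ} (hx : Irrational x) :
    LinearIndependent ℚ ![1, x] := by
  refine LinearIndependent.pair_iff.mpr fun s t hst ↦ ?_
  rw [Rat.smul_def, Rat.smul_def, mul_one] at hst
  obtain rfl : t = 0 := by
    by_contra ht
    exact ((hx.ratCast_mul ht).ratCast_add s).ne_zero hst
  simpa using hst

theorem Irrational.exists_ratCoords {x : ℝ} (hx : Irrational x) :
    ∃ f : ℝ →ₗ[ℚ] Fin 2 → ℚ, ∀ a b : ℚ, f (a + b * x) = ![a, b] := by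
  obtain ⟨f, hf⟩ := hx.linearIndependent_one_self.exists_linearMap_apply_eq_single
  refine ⟨f, fun a b ↦ ?_⟩
  have h_one := hf 0
  have h_x := hf 1
  simp only [Matrix.cons_val_zero, Matrix.cons_val_one] at h_one h_x
  rw [← mul_one (a : ℝ), ← Rat.smul_def, ← Rat.smul_def, map_add, map_smul, map_smul, h_one, h_x]
  ext i
  fin_cases i <;> simp

section IcosFlow

variable (f : ℝ →ₗ[ℚ] Fin 2 → ℚ)

-- With `f (a + b * phi) = ![a, b]`, the weights are one choice making all 30 values on `ICOS`
-- nonzero integers in `[-4, 4]`.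
noncomputable def icosFlowFunctional : EuclideanSpace ℝ (Fin 3) →+ ℚ where
  toFun x := 4 * f (x 0) 0 + 3 * f (x 0) 1 + 4 * f (x 1) 0 + f (x 1) 1 + 2 * f (x 2) 0 + f (x 2) 1
  map_zero' := by simp
  map_add' x y := by simp only [PiLp.add_apply, map_add, Pi.add_apply]; ring

variable {f}

theorem icosFlowFunctional_mem (hf : ∀ a b : ℚ, f (a + b * phi) = ![a, b]) :
    ∀ p ∈ ICOS, ∃ m ∈ ({-4, -3, -2, -1, 1, 2, 3, 4} : Set ℤ), icosFlowFunctional f p = m := by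
  have coords (x : ℝ) (a b : ℚ) (hx : x = a + b * phi) : f x = ![a, b] := hx ▸ hf a b
  have h_one := coords 1 1 0 (by simp)
  have h_half := coords (1 / 2) (1 / 2) 0 (by simp)
  have h_phi_half := coords (phi / 2) 0 (1 / 2) (by push_cast; ring)
  have h_phi_sub_one_half := coords ((phi - 1) / 2) (-1 / 2) (1 / 2) (by push_cast; ring)
  rintro p (⟨s, (rfl | rfl), rfl | rfl | rfl⟩ |
    ⟨s₁, (rfl | rfl), s₂, (rfl | rfl), s₃, (rfl | rfl), rfl | rfl | rfl⟩) <;>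
  simp only [icosFlowFunctional, AddMonoidHom.coe_mk, ZeroHom.coe_mk, Matrix.cons_val_zero,
    Matrix.cons_val_one, Matrix.cons_val_two, Matrix.cons_val_fin_one, Matrix.head_cons,
    Matrix.tail_cons, one_mul, neg_one_mul, map_neg, map_zero, h_one, h_half, h_phi_half,
    h_phi_sub_one_half] <;>
  norm_num

end IcosFlow

/-- The icosidodecahedron configuration admits a nowhere-zero 5-flow labeling:
a map to `{-4,...,-1,1,...,4}` that is odd under the antipodal map and sums to
zero on every zero-sum triple. -/
theorem icos_admits_nz5_flow :
    ∃ q : EuclideanSpace ℝ (Fin 3) → ℤ,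
      (∀ p ∈ ICOS, q p ∈ ({-4, -3, -2, -1, 1, 2, 3, 4} : Set ℤ)) ∧
      (∀ p ∈ ICOS, q (-p) = -q p) ∧
      (∀ a ∈ ICOS, ∀ b ∈ ICOS, ∀ c ∈ ICOS, a + b + c = 0 → q a + q b + q c = 0) := by
  obtain ⟨f, hf⟩ := (Real.goldenRatio_irrational : Irrational phi).exists_ratCoords
  exact ⟨_, isFlowLabeling_round_comp (icosFlowFunctional_mem hf)⟩
end

section
/- There exists a subset S of the unit sphere S² ⊂ ℝ³ of cardinality 36 such that: S is closed under the antipodal map x ↦ -x; the absolute value of every coordinate of every point of S belongs to the set {0, (2-√3)/2, (√3-1)/2, 1/2, √(√3-1), √3/2, 1}; there is NO map q : S → ℤ with q(x) ∈ {-4,-3,-2,-1,1,2,3,4} for all x ∈ S, q(-x) = -q(x) for all x ∈ S, and q(x) + q(y) + q(z) = 0 whenever x, y, z ∈ S satisfy x + y + z = 0; while there IS such a map with values in {-5,...,-1,1,...,5}. -/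
local notation "⟪" x ", " y "⟫" => @inner ℝ _ _ x y

/-!
Let `t = √(√3 - 1)`. The set consists of the twelve points `(0, cos (kπ/6), sin (kπ/6))` and the
twenty-four points `(±t, ρ cos θ, ρ sin θ)` with `ρ² = 1 - t² = 2 - √3` and `θ = π/12 + kπ/6`.
All of them are integer combinations of five of them, `Pₖ = (0, cos (kπ/6), sin (kπ/6))` for
`k ≤ 3` and `P₄ = (t, (√3 - 1)/2, (√3 - 1)/2)`, which are independent over `ℤ` since `√3` is
irrational and `t ≠ 0`; so the set is coded by 36 vectors of `ℤ⁵`, and zero-sum triples can be read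
off the codes.

Starting from `P₀, …, P₄` and repeatedly adding antipodes and third points of zero-sum triples one
reaches every point, so every flow on the set, with values in any abelian group, is a linear form
in the codes. A flow with values in `±{1, …, 4}`, reduced mod 5, would be a linear form on `𝔽₅⁵`
vanishing at no point, but every linear form on `𝔽₅⁵` vanishes at one of the 36 codes. On the other
hand the linear form with coefficients `(-2, -2, -1, 1, 1)` takes its values in `±{1, …, 5}`.
-/

section Flow

variable {A E G H : Type*} [AddCommGroup A] [AddCommGroup E] [AddCommGroup G] [AddCommGroup H]

def IsFlowOn (S : Set A) (q : A → G) : Prop :=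
  (∀ x ∈ S, q (-x) = -q x) ∧ ∀ x ∈ S, ∀ y ∈ S, ∀ z ∈ S, x + y + z = 0 → q x + q y + q z = 0

theorem AddMonoidHomClass.isFlowOn {F : Type*} [FunLike F A G] [AddMonoidHomClass F A G]
    (f : F) (S : Set A) : IsFlowOn S f :=
  ⟨fun x _ => map_neg f x, fun x _ y _ z _ h => by rw [← map_add, ← map_add, h, map_zero]⟩

namespace IsFlowOn

variable {S : Set A} {p q : A → G}

theorem map (hq : IsFlowOn S q) (f : G →+ H) : IsFlowOn S (f ∘ q) :=
  ⟨fun x hx => by simp [hq.1 x hx], fun x hx y hy z hz h => by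
    simp only [Function.comp_apply, ← map_add, hq.2 x hx y hy z hz h, map_zero]⟩

theorem sub (hp : IsFlowOn S p) (hq : IsFlowOn S q) : IsFlowOn S (p - q) :=
  ⟨fun x hx => by simp only [Pi.sub_apply, hp.1 x hx, hq.1 x hx]; abel,
    fun x hx y hy z hz h => by
      simp only [Pi.sub_apply]
      linear_combination (norm := abel) hp.2 x hx y hy z hz h - hq.2 x hx y hy z hz h⟩

end IsFlowOn

theorem isFlowOn_image_iff {φ : A →+ E} (hφ : Function.Injective φ) {T : Set A} {q : E → G} :
    IsFlowOn (φ '' T) q ↔ IsFlowOn T (q ∘ φ) := by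
  refine ⟨fun ⟨hneg, hsum⟩ => ⟨fun a ha => ?_, fun a ha b hb c hc h => ?_⟩,
    fun ⟨hneg, hsum⟩ => ⟨?_, ?_⟩⟩
  · simpa only [Function.comp_apply, map_neg] using hneg (φ a) ⟨a, ha, rfl⟩
  · refine hsum _ ⟨a, ha, rfl⟩ _ ⟨b, hb, rfl⟩ _ ⟨c, hc, rfl⟩ ?_
    rw [← map_add, ← map_add, h, map_zero]
  · rintro _ ⟨a, ha, rfl⟩
    simpa only [Function.comp_apply, map_neg] using hneg a ha
  · rintro _ ⟨a, ha, rfl⟩ _ ⟨b, hb, rfl⟩ _ ⟨c, hc, rfl⟩ h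
    rw [← map_add, ← map_add, ← map_zero φ] at h
    exact hsum a ha b hb c hc (hφ h)

variable [DecidableEq A]

def propagate (T X : List A) : List A :=
  T.filter fun a => a ∈ X ∨ -a ∈ X ∨ ∃ b ∈ X, -(a + b) ∈ X

namespace IsFlowOn

variable {T X : List A} {q : A → G}

theorem eq_zero_of_mem_propagate (hq : IsFlowOn {a | a ∈ T} q)
    (hX : ∀ b ∈ X, b ∈ T ∧ q b = 0) : ∀ a ∈ propagate T X, a ∈ T ∧ q a = 0 := by
  intro a ha
  simp only [propagate, List.mem_filter, decide_eq_true_eq] at ha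
  obtain ⟨haT, hself | hneg | ⟨b, hb, hc⟩⟩ := ha
  · exact hX a hself
  · have := hq.1 (-a) (hX _ hneg).1
    rw [neg_neg, (hX _ hneg).2, neg_zero] at this
    exact ⟨haT, this⟩
  · have := hq.2 a haT b (hX b hb).1 _ (hX _ hc).1 (add_neg_cancel _)
    rw [(hX b hb).2, (hX _ hc).2] at this
    exact ⟨haT, by simpa using this⟩

theorem eq_zero_of_mem_iterate_propagate (hq : IsFlowOn {a | a ∈ T} q)
    (hX : ∀ b ∈ X, b ∈ T ∧ q b = 0) (k : ℕ) : ∀ a ∈ (propagate T)^[k] X, a ∈ T ∧ q a = 0 := by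
  induction k generalizing X with
  | zero => exact hX
  | succ k ih => exact ih (hq.eq_zero_of_mem_propagate hX)

theorem eq_linearCombination {n k : ℕ} {T : List (Fin n → ℤ)} {q : (Fin n → ℤ) → G}
    (hq : IsFlowOn {a | a ∈ T} q) (hbasis : ∀ i, Pi.single i 1 ∈ T)
    (hT : ∀ a ∈ T, a ∈ (propagate T)^[k] (List.ofFn fun i => Pi.single i 1))
    (a : Fin n → ℤ) (ha : a ∈ T) :
    q a = Fintype.linearCombination ℤ (fun i => q (Pi.single i 1)) a := by
  set ℓ := Fintype.linearCombination ℤ fun i => q (Pi.single i 1)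
  have hr : IsFlowOn {a | a ∈ T} (q - ⇑ℓ) := hq.sub (AddMonoidHomClass.isFlowOn ℓ _)
  have hbasis' : ∀ b ∈ List.ofFn (fun i => Pi.single i 1), b ∈ T ∧ (q - ⇑ℓ) b = 0 := by
    simp only [List.mem_ofFn, forall_exists_index]
    rintro _ i rfl
    simp [ℓ, Fintype.linearCombination_apply_single, hbasis i]
  exact sub_eq_zero.mp (hr.eq_zero_of_mem_iterate_propagate hbasis' k a (hT a ha)).2

end IsFlowOn

end Flow

namespace Counterexample36

noncomputable def toReal : ℤ√3 →+* ℝ := Zsqrtd.lift ⟨√3, Real.mul_self_sqrt (by norm_num)⟩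

theorem toReal_apply (u : ℤ√3) : toReal u = u.re + u.im * √3 := Zsqrtd.lift_apply_apply _ _

theorem toReal_injective : Function.Injective toReal :=
  Zsqrtd.lift_injective _ fun n h => by
    have : n ≤ 1 := by nlinarith
    have : -1 ≤ n := by nlinarith
    interval_cases n <;> omega

noncomputable def height : ℝ := √(√3 - 1)

theorem one_lt_sqrt_three : 1 < √3 := (Real.lt_sqrt zero_le_one).2 (by norm_num)

theorem sqrt_three_lt_two : √3 < 2 := (Real.sqrt_lt' two_pos).2 (by norm_num)

theorem height_sq : height ^ 2 = √3 - 1 := Real.sq_sqrt (by linarith [one_lt_sqrt_three])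

theorem height_pos : 0 < height := Real.sqrt_pos.mpr (by linarith [one_lt_sqrt_three])

noncomputable def embed : ℤ × ℤ√3 × ℤ√3 →+ EuclideanSpace ℝ (Fin 3) :=
  AddMonoidHom.mk' (fun x => pt (x.1 * height) (toReal x.2.1 / 2) (toReal x.2.2 / 2)) fun x y => by
    simp only [Prod.fst_add, Prod.snd_add, map_add, Int.cast_add, add_mul, add_div,
      ← WithLp.toLp_add, Matrix.cons_add_cons, Matrix.empty_add_empty]

theorem embed_apply (x : ℤ × ℤ√3 × ℤ√3) :
    embed x = pt (x.1 * height) (toReal x.2.1 / 2) (toReal x.2.2 / 2) := rfl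

theorem embed_injective : Function.Injective embed := by
  rintro ⟨c, u, v⟩ ⟨c', u', v'⟩ h
  have h0 := congrArg (· 0) h
  have h1 := congrArg (· 1) h
  have h2 := congrArg (· 2) h
  simp only [embed_apply, PiLp.toLp_apply, Matrix.cons_val] at h0 h1 h2
  have hc : (c : ℝ) = c' := mul_right_cancel₀ height_pos.ne' h0
  simp only [Prod.mk.injEq]
  exact ⟨by exact_mod_cast hc, toReal_injective (by linarith), toReal_injective (by linarith)⟩

theorem norm_embed {c : ℤ} {u v : ℤ√3} (h : u * u + v * v + 4 * c ^ 2 * ⟨-1, 1⟩ = 4) :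
    ‖embed (c, u, v)‖ = 1 := by
  have h' := congrArg toReal h
  simp only [map_add, map_mul, map_pow, map_intCast, map_ofNat] at h'
  rw [toReal_apply ⟨-1, 1⟩] at h'
  rw [EuclideanSpace.norm_eq, Fin.sum_univ_three, Real.sqrt_eq_one]
  simp only [embed_apply, PiLp.toLp_apply, Matrix.cons_val, Real.norm_eq_abs, sq_abs]
  push_cast at h'
  linear_combination h' / 4 + (c : ℝ) ^ 2 * height_sq

def absCoordinates : Set ℝ :=
  {0, (2 - √3) / 2, (√3 - 1) / 2, 1 / 2, √(√3 - 1), √3 / 2, 1}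

def twiceAbsCoordinates : List (ℤ√3) := [⟨0, 0⟩, ⟨2, -1⟩, ⟨-1, 1⟩, ⟨1, 0⟩, ⟨0, 1⟩, ⟨2, 0⟩]

theorem abs_half_toReal_mem {u : ℤ√3} (hu : u ∈ twiceAbsCoordinates ∨ -u ∈ twiceAbsCoordinates) :
    |toReal u / 2| ∈ absCoordinates := by
  wlog h : u ∈ twiceAbsCoordinates generalizing u
  · have h' := hu.resolve_left h
    simpa [abs_neg, neg_div] using this (Or.inl h') h'
  have := one_lt_sqrt_three
  have := sqrt_three_lt_two
  simp only [twiceAbsCoordinates, List.mem_cons, List.not_mem_nil, or_false] at h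
  simp only [absCoordinates, Set.mem_insert_iff, Set.mem_singleton_iff]
  rcases h with rfl | rfl | rfl | rfl | rfl | rfl <;>
    rw [toReal_apply, abs_of_nonneg (by push_cast; linarith)] <;> push_cast
  · exact .inl (by ring)
  · exact .inr <| .inl (by ring)
  · exact .inr <| .inr <| .inl (by ring)
  · exact .inr <| .inr <| .inr <| .inl (by ring)
  · exact .inr <| .inr <| .inr <| .inr <| .inr <| .inl (by ring)
  · exact .inr <| .inr <| .inr <| .inr <| .inr <| .inr (by ring)

theorem abs_mul_height_mem {c : ℤ} (hc : |c| ≤ 1) : |c * height| ∈ absCoordinates := by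
  rw [abs_mul, abs_of_pos height_pos, ← Int.cast_abs]
  rcases (abs_nonneg c).eq_or_lt' with h | h
  · simp [h, absCoordinates]
  · simp [show |c| = 1 by omega, absCoordinates, height]

-- The codes of `P₀, …, P₄`.
def basisCodes : Fin 5 → ℤ × ℤ√3 × ℤ√3 :=
  ![(0, ⟨2, 0⟩, ⟨0, 0⟩), (0, ⟨0, 1⟩, ⟨1, 0⟩), (0, ⟨1, 0⟩, ⟨0, 1⟩), (0, ⟨0, 0⟩, ⟨2, 0⟩),
    (1, ⟨-1, 1⟩, ⟨-1, 1⟩)]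

def toCode : (Fin 5 → ℤ) →+ ℤ × ℤ√3 × ℤ√3 :=
  (Fintype.linearCombination ℤ basisCodes).toAddMonoidHom

theorem toCode_injective : Function.Injective toCode := by
  refine (injective_iff_map_eq_zero _).2 fun a h => ?_
  simp only [toCode, basisCodes, LinearMap.toAddMonoidHom_coe, Fintype.linearCombination_apply,
    zsmul_eq_mul, Fin.sum_univ_five, Fin.isValue, Matrix.cons_val_zero, Matrix.cons_val_one,
    Matrix.cons_val, Prod.ext_iff, Prod.fst_add, Prod.fst_mul, Prod.fst_intCast, Int.cast_eq,
    mul_zero, add_zero, mul_one, zero_add, Prod.fst_zero, Prod.snd_add, Prod.snd_mul,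
    Prod.snd_intCast, Prod.snd_zero, Zsqrtd.smul_val, Zsqrtd.add_def, mul_neg, Zsqrtd.ext_iff,
    Zsqrtd.re_zero, Zsqrtd.im_zero] at h
  funext i
  fin_cases i <;>
    simp only [Fin.zero_eta, Fin.mk_one, Fin.reduceFinMk, Fin.isValue, Pi.zero_apply] <;> omega

noncomputable def toPoint : (Fin 5 → ℤ) →+ EuclideanSpace ℝ (Fin 3) := embed.comp toCode

theorem toPoint_injective : Function.Injective toPoint := embed_injective.comp toCode_injective

-- One point of each antipodal pair, in the basis `P₀, …, P₄`: first the six on the great circle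
-- `x = 0`, then the twelve at height `t`.
def halfCodes : List (Fin 5 → ℤ) :=
  [![1, 0, 0, 0, 0],
   ![0, 1, 0, 0, 0],
   ![0, 0, 1, 0, 0],
   ![0, 0, 0, 1, 0],
   ![-1, 0, 1, 0, 0],
   ![0, -1, 0, 1, 0],
   ![0, 0, 0, 0, 1],
   ![2, -1, -2, 2, 1],
   ![2, -2, -1, 2, 1],
   ![1, 0, -2, 1, 1],
   ![1, -1, 0, 0, 1],
   ![2, -2, -1, 1, 1],
   ![1, -2, 0, 1, 1],
   ![1, -1, -2, 2, 1],
   ![0, 0, -1, 1, 1],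
   ![2, -2, -2, 2, 1],
   ![0, -1, 0, 0, 1],
   ![0, 0, -1, 0, 1]]

def codes : List (Fin 5 → ℤ) := halfCodes ++ halfCodes.map (-·)

noncomputable def configuration : Set (EuclideanSpace ℝ (Fin 3)) := toPoint '' {a | a ∈ codes}

theorem finite_configuration : configuration.Finite := (List.finite_toSet codes).image _

theorem ncard_configuration : configuration.ncard = 36 := by
  have hnodup : codes.Nodup := by decide +kernel
  rw [configuration, Set.ncard_image_of_injective _ toPoint_injective, ← List.coe_toFinset,
    Set.ncard_coe_finset, List.toFinset_card_of_nodup hnodup]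
  rfl

theorem neg_mem_configuration {x : EuclideanSpace ℝ (Fin 3)} (hx : x ∈ configuration) :
    -x ∈ configuration := by
  have key : ∀ a ∈ codes, -a ∈ codes := by decide +kernel
  obtain ⟨a, ha, rfl⟩ := hx
  exact ⟨-a, key a ha, map_neg toPoint a⟩

theorem norm_of_mem_configuration {x : EuclideanSpace ℝ (Fin 3)} (hx : x ∈ configuration) :
    ‖x‖ = 1 := by
  have key : ∀ a ∈ codes, (toCode a).2.1 * (toCode a).2.1 + (toCode a).2.2 * (toCode a).2.2
      + 4 * (toCode a).1 ^ 2 * ⟨-1, 1⟩ = 4 := by decide +kernel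
  obtain ⟨a, ha, rfl⟩ := hx
  exact norm_embed (key a ha)

theorem abs_apply_mem_of_mem_configuration {x : EuclideanSpace ℝ (Fin 3)}
    (hx : x ∈ configuration) (i : Fin 3) : |x i| ∈ absCoordinates := by
  have key : ∀ a ∈ codes, |(toCode a).1| ≤ 1 ∧
      ((toCode a).2.1 ∈ twiceAbsCoordinates ∨ -(toCode a).2.1 ∈ twiceAbsCoordinates) ∧
      ((toCode a).2.2 ∈ twiceAbsCoordinates ∨ -(toCode a).2.2 ∈ twiceAbsCoordinates) := by
    decide +kernel
  obtain ⟨a, ha, rfl⟩ := hx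
  obtain ⟨h0, h1, h2⟩ := key a ha
  fin_cases i
  · exact abs_mul_height_mem h0
  · exact abs_half_toReal_mem h1
  · exact abs_half_toReal_mem h2

theorem isFlowOn_configuration_iff {G : Type*} [AddCommGroup G]
    {q : EuclideanSpace ℝ (Fin 3) → G} :
    IsFlowOn configuration q ↔ IsFlowOn {a | a ∈ codes} (q ∘ toPoint) :=
  isFlowOn_image_iff toPoint_injective

theorem single_mem_codes : ∀ i, Pi.single i 1 ∈ codes := by decide +kernel

theorem mem_iterate_propagate_codes :
    ∀ a ∈ codes, a ∈ (propagate codes)^[7] (List.ofFn fun i => Pi.single i 1) := by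
  decide +kernel

theorem exists_mem_codes_linearCombination_eq_zero (w : Fin 5 → ZMod 5) :
    ∃ a ∈ codes, Fintype.linearCombination ℤ w a = 0 := by
  have key : ∀ w₀ w₁ w₂ w₃ w₄ : ZMod 5, ∃ a ∈ codes,
      a 0 * w₀ + a 1 * w₁ + a 2 * w₂ + a 3 * w₃ + a 4 * w₄ = 0 := by
    decide +kernel
  obtain ⟨a, ha, h⟩ := key (w 0) (w 1) (w 2) (w 3) (w 4)
  refine ⟨a, ha, ?_⟩
  simpa only [Fintype.linearCombination_apply, zsmul_eq_mul, Fin.sum_univ_five] using h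

theorem not_exists_flow_abs_le_four : ¬ ∃ q : EuclideanSpace ℝ (Fin 3) → ℤ,
    (∀ x ∈ configuration, q x ∈ ({-4, -3, -2, -1, 1, 2, 3, 4} : Set ℤ)) ∧
      IsFlowOn configuration q := by
  rintro ⟨q, hval, hq⟩
  set p : (Fin 5 → ℤ) → ZMod 5 := Int.castAddHom (ZMod 5) ∘ q ∘ toPoint
  have hp : IsFlowOn {a | a ∈ codes} p := (isFlowOn_configuration_iff.1 hq).map _
  obtain ⟨a, ha, h0⟩ := exists_mem_codes_linearCombination_eq_zero fun i => p (Pi.single i 1)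
  rw [← hp.eq_linearCombination single_mem_codes mem_iterate_propagate_codes a ha] at h0
  have hqa := hval _ ⟨a, ha, rfl⟩
  simp only [Set.mem_insert_iff, Set.mem_singleton_iff] at hqa
  simp only [p, Function.comp_apply, Int.coe_castAddHom, ZMod.intCast_zmod_eq_zero_iff_dvd] at h0
  omega

def sixFlow : (Fin 5 → ℤ) →+ ℤ := (Fintype.linearCombination ℤ ![-2, -2, -1, 1, 1]).toAddMonoidHom

theorem exists_flow_abs_le_five : ∃ q : EuclideanSpace ℝ (Fin 3) → ℤ,
    (∀ x ∈ configuration, q x ∈ ({-5, -4, -3, -2, -1, 1, 2, 3, 4, 5} : Set ℤ)) ∧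
      IsFlowOn configuration q := by
  have hval : ∀ a ∈ codes, sixFlow a ≠ 0 ∧ |sixFlow a| ≤ 5 := by decide +kernel
  refine ⟨sixFlow ∘ Function.invFun toPoint, ?_, ?_⟩
  · rintro _ ⟨a, ha, rfl⟩
    obtain ⟨hne, hle⟩ := hval a ha
    rw [abs_le] at hle
    rw [Function.comp_apply, Function.leftInverse_invFun toPoint_injective a]
    simp only [Set.mem_insert_iff, Set.mem_singleton_iff]
    omega
  · rw [isFlowOn_configuration_iff, Function.comp_assoc, Function.invFun_comp toPoint_injective]
    exact AddMonoidHomClass.isFlowOn sixFlow _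

end Counterexample36

/-- Counterexample 2: a 36-point antipodally-closed subset of the unit sphere,
with all coordinate absolute values among
`{0, (2-√3)/2, (√3-1)/2, 1/2, √(√3-1), √3/2, 1}`, which admits a nowhere-zero
6-flow labeling but no nowhere-zero 5-flow labeling. -/
theorem counterexample_thirtysix_points :
    ∃ S : Set (EuclideanSpace ℝ (Fin 3)),
      S.Finite ∧
      S.ncard = 36 ∧
      (∀ x ∈ S, ‖x‖ = 1) ∧
      (∀ x ∈ S, -x ∈ S) ∧
      (∀ x ∈ S, ∀ i : Fin 3,
        |x i| ∈ ({0, (2 - Real.sqrt 3) / 2, (Real.sqrt 3 - 1) / 2, 1 / 2,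
          Real.sqrt (Real.sqrt 3 - 1), Real.sqrt 3 / 2, 1} : Set ℝ)) ∧
      (¬ ∃ q : EuclideanSpace ℝ (Fin 3) → ℤ,
        (∀ x ∈ S, q x ∈ ({-4, -3, -2, -1, 1, 2, 3, 4} : Set ℤ)) ∧
        (∀ x ∈ S, q (-x) = -q x) ∧
        (∀ x ∈ S, ∀ y ∈ S, ∀ z ∈ S, x + y + z = 0 → q x + q y + q z = 0)) ∧
      (∃ q : EuclideanSpace ℝ (Fin 3) → ℤ,
        (∀ x ∈ S, q x ∈ ({-5, -4, -3, -2, -1, 1, 2, 3, 4, 5} : Set ℤ)) ∧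
        (∀ x ∈ S, q (-x) = -q x) ∧
        (∀ x ∈ S, ∀ y ∈ S, ∀ z ∈ S, x + y + z = 0 → q x + q y + q z = 0)) := by
  open Counterexample36 in
  exact ⟨configuration, finite_configuration, ncard_configuration,
    fun _ => norm_of_mem_configuration, fun _ => neg_mem_configuration,
    fun _ => abs_apply_mem_of_mem_configuration, not_exists_flow_abs_le_four,
    exists_flow_abs_le_five⟩
end
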